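/- Let B be a 2-(v,k,λ_2;q) design with a tactical decomposition with matrices [ρ_ij] and [κ_ij]. Then Σ_{j=1}^n ρ_{lj} κ_{rj} = λ_2 · |Ψ_r| if l ≠ r, and Σ_{j=1}^n ρ_{lj} κ_{rj} = λ_1 + λ_2 · (|Ψ_r| − 1) if l = r, where λ_1 = λ_2 [v-1 choose 1]_q / [k-1 choose 1]_q. -/

import Mathlib

open scoped Classical

/-- The Gaussian binomial coefficient `[v choose r]_q`. -/
def gaussBinom (q v r : ℕ) : ℕ :=
  (∏ i ∈ Finset.range r, (q ^ (v - i) - 1)) / (∏ i ∈ Finset.range r, (q ^ (i + 1) - 1))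

/-- `B` is a `t-(v,k,λ;q)` design. -/
def IsQDesign (F : Type*) [Field F] [Fintype F] (v t k lam : ℕ)
    (B : Finset (Submodule F (Fin v → F))) : Prop :=
  (∀ b ∈ B, Module.finrank F ↥b = k) ∧
  ∀ W : Submodule F (Fin v → F), Module.finrank F ↥W = t →
    (B.filter fun b => W ≤ b).card = lam

/-- A tactical decomposition of a design `B` over `F`: a partition of the points (the
`1`-dimensional subspaces of `F^v`) into classes `Pc 1, …, Pc m` and of the block set `B`
into classes `Bc 1, …, Bc n`, such that every point of `Pc i` lies in exactly `rho i j`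
blocks of `Bc j` and every block of `Bc j` contains exactly `kap i j` points of `Pc i`. -/
structure TacticalDecomp (F : Type*) [Field F] [Fintype F] (v m n : ℕ)
    (B : Finset (Submodule F (Fin v → F))) where
  Pc : Fin m → Set (Submodule F (Fin v → F))
  Bc : Fin n → Finset (Submodule F (Fin v → F))
  rho : Fin m → Fin n → ℕ
  kap : Fin m → Fin n → ℕ
  Pc_nonempty : ∀ i, (Pc i).Nonempty
  Bc_nonempty : ∀ j, (Bc j).Nonempty
  Pc_sub : ∀ i, Pc i ⊆ {W : Submodule F (Fin v → F) | Module.finrank F ↥W = 1}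
  Pc_cover : ∀ W : Submodule F (Fin v → F), Module.finrank F ↥W = 1 → ∃ i, W ∈ Pc i
  Pc_disj : ∀ i i', i ≠ i' → Disjoint (Pc i) (Pc i')
  Bc_cover : ∀ b : Submodule F (Fin v → F), b ∈ B ↔ ∃ j, b ∈ Bc j
  Bc_disj : ∀ j j', j ≠ j' → Disjoint (Bc j) (Bc j')
  rho_eq : ∀ i j, ∀ P ∈ Pc i, ((Bc j).filter fun b => P ≤ b).card = rho i j
  kap_eq : ∀ i j, ∀ b ∈ Bc j, {Q | Q ∈ Pc i ∧ Q ≤ b}.ncard = kap i j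

/-!
Fix a point `P ∈ Ψ_l` and count the flags `(Q, b)` with `Q ∈ Ψ_r` and `P, Q ≤ b ∈ B`. Block
class by block class this gives `Σ_j ρ_{lj} κ_{rj}`; point by point it gives
`Σ_{Q ∈ Ψ_r} #{b ∈ B | P, Q ≤ b}`. A point `Q ≠ P` contributes `λ₂`, as `P ⊔ Q` is a 2-space,
while `Q = P` contributes the number `λ₁` of blocks through `P`. Since a `d`-space has
`[d choose 1]_q = 1 + q + ⋯ + q^(d-1)` points, counting the pairs `(Q, b)` with `Q ≠ P` and
`P, Q ≤ b ∈ B` gives `λ₁ ([k choose 1]_q - 1) = λ₂ ([v choose 1]_q - 1)`, that is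
`λ₁ [k-1 choose 1]_q = λ₂ [v-1 choose 1]_q`.
-/

open Finset Module

noncomputable instance Submodule.fintypeOfFinite {R V : Type*} [Ring R] [AddCommGroup V]
    [Module R V] [Finite V] : Fintype (Submodule R V) :=
  haveI : Finite (Submodule R V) := Finite.of_injective _ SetLike.coe_injective
  Fintype.ofFinite _

lemma gaussBinom_one_eq_sum {q : ℕ} (hq : 2 ≤ q) (d : ℕ) :
    gaussBinom q d 1 = ∑ i ∈ range d, q ^ i := by
  simp [gaussBinom, Nat.geomSum_eq hq]

lemma sum_range_pow_sub_one (q d : ℕ) :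
    ∑ i ∈ range d, q ^ i - 1 = q * ∑ i ∈ range (d - 1), q ^ i := by
  cases d with
  | zero => simp
  | succ d => simp [sum_range_succ', pow_succ', mul_sum]

lemma gaussBinom_one_pos {q d : ℕ} (hq : 2 ≤ q) (hd : 1 ≤ d) : 0 < gaussBinom q d 1 := by
  obtain ⟨d, rfl⟩ := Nat.exists_eq_add_of_le' hd
  rw [gaussBinom_one_eq_sum hq, sum_range_succ']
  positivity

lemma Submodule.finrank_sup_eq_two {K V : Type*} [DivisionRing K] [AddCommGroup V] [Module K V]
    [FiniteDimensional K V] {P Q : Submodule K V} (hP : finrank K P = 1) (hQ : finrank K Q = 1)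
    (hPQ : P ≠ Q) : finrank K ↥(P ⊔ Q) = 2 := by
  have hlt : P ⊓ Q < P := inf_le_left.lt_of_ne fun h =>
    hPQ (eq_of_le_of_finrank_eq (inf_eq_left.1 h) (hP.trans hQ.symm))
  have := Submodule.finrank_lt_finrank_of_lt hlt
  have := Submodule.finrank_sup_add_finrank_inf_eq P Q
  omega

section Points

variable {F V : Type*} [Field F] [AddCommGroup V] [Module F V] [Finite V]

noncomputable def points (W : Submodule F V) : Finset (Submodule F V) :=
  {Q | finrank F Q = 1 ∧ Q ≤ W}

lemma mem_points {W Q : Submodule F V} : Q ∈ points W ↔ finrank F Q = 1 ∧ Q ≤ W := by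
  simp [points]

lemma card_points [Fintype F] (W : Submodule F V) :
    #(points W) = ∑ i ∈ range (finrank F W), Fintype.card F ^ i := by
  let e : Projectivization F W ≃ {Q : Submodule F V // finrank F Q = 1 ∧ Q ≤ W} :=
    (Projectivization.equivSubmodule F W).trans <|
      ((Submodule.MapSubtype.orderIso W).toEquiv.subtypeEquiv
        (p := fun H : Submodule F W => finrank F H = 1)
        (q := fun Q : {Q : Submodule F V // Q ≤ W} => finrank F Q.1 = 1)
        fun H => by rw [← Submodule.finrank_map_subtype_eq W H]; rfl).trans <|
      (Equiv.subtypeSubtypeEquivSubtypeInter (· ≤ W) fun Q => finrank F Q = 1).trans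
        (Equiv.subtypeEquivRight fun _ => and_comm)
  rw [points, ← Fintype.card_subtype, ← Nat.card_eq_fintype_card, ← Nat.card_congr e,
    Projectivization.card_of_finrank F W rfl, Nat.card_eq_fintype_card]

end Points

namespace IsQDesign

variable {F : Type*} [Field F] [Fintype F] {v k lam : ℕ} {B : Finset (Submodule F (Fin v → F))}
  {P : Submodule F (Fin v → F)}

lemma card_blocks_through_pair (hB : IsQDesign F v 2 k lam B) {Q : Submodule F (Fin v → F)}
    (hP : finrank F P = 1) (hQ : finrank F Q = 1) (hPQ : P ≠ Q) :
    #{b ∈ B | P ≤ b ∧ Q ≤ b} = lam := by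
  simpa only [sup_le_iff] using hB.2 _ (Submodule.finrank_sup_eq_two hP hQ hPQ)

lemma sum_card_blocks_through_pair (hB : IsQDesign F v 2 k lam B) (hP : finrank F P = 1)
    (S : Finset (Submodule F (Fin v → F))) (hS : ∀ Q ∈ S, finrank F Q = 1) (hPS : P ∉ S) :
    ∑ Q ∈ S, #{b ∈ B | P ≤ b ∧ Q ≤ b} = #S * lam :=
  sum_const_nat fun Q hQ =>
    hB.card_blocks_through_pair hP (hS Q hQ) fun hPQ => hPS (hPQ ▸ hQ)

lemma card_blocks_through_point_mul (hB : IsQDesign F v 2 k lam B) (hP : finrank F P = 1) :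
    #{b ∈ B | P ≤ b} * gaussBinom (Fintype.card F) (k - 1) 1 =
      lam * gaussBinom (Fintype.card F) (v - 1) 1 := by
  set q := Fintype.card F
  have hq : 2 ≤ q := Fintype.one_lt_card
  have hflags := card_mul_eq_card_mul (fun Q b => Q ≤ b) (s := (points ⊤).erase P)
    (t := {b ∈ B | P ≤ b}) (m := lam) (n := ∑ i ∈ range k, q ^ i - 1) ?_ ?_
  · rw [card_erase_of_mem (mem_points.2 ⟨hP, le_top⟩), card_points, finrank_top,
      finrank_fin_fun, sum_range_pow_sub_one, sum_range_pow_sub_one] at hflags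
    rw [gaussBinom_one_eq_sum hq, gaussBinom_one_eq_sum hq]
    refine Nat.eq_of_mul_eq_mul_left (by omega : 0 < q) ?_
    linarith
  · intro Q hQ
    rw [bipartiteAbove, filter_filter]
    exact hB.card_blocks_through_pair hP (mem_points.1 (mem_of_mem_erase hQ)).1
      (ne_of_mem_erase hQ).symm
  · intro b hb
    obtain ⟨hbB, hPb⟩ := mem_filter.1 hb
    have hbelow : bipartiteBelow (· ≤ ·) ((points ⊤).erase P) b = (points b).erase P := by
      ext Q
      simp only [bipartiteBelow, mem_filter, mem_erase, mem_points, le_top, and_true]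
      tauto
    rw [hbelow, card_erase_of_mem (mem_points.2 ⟨hP, hPb⟩), card_points, hB.1 b hbB]

end IsQDesign

namespace TacticalDecomp

variable {F : Type*} [Field F] [Fintype F] {v m n : ℕ} {B : Finset (Submodule F (Fin v → F))}
  (T : TacticalDecomp F v m n B)

lemma biUnion_Bc : univ.biUnion T.Bc = B := by
  ext b
  simp [T.Bc_cover b]

lemma sum_filter_eq_sum_filter_Bc (p : Submodule F (Fin v → F) → Prop)
    (f : Submodule F (Fin v → F) → ℕ) : ∑ b ∈ B with p b, f b = ∑ j, ∑ b ∈ T.Bc j with p b, f b :=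
  calc ∑ b ∈ B with p b, f b = ∑ b ∈ univ.biUnion T.Bc with p b, f b := by rw [T.biUnion_Bc]
    _ = ∑ j, ∑ b ∈ T.Bc j with p b, f b := by
      rw [filter_biUnion, sum_biUnion fun j _ j' _ h => disjoint_filter_filter (T.Bc_disj j j' h)]

lemma sum_rho_mul_kap {l : Fin m} {P : Submodule F (Fin v → F)} (hP : P ∈ T.Pc l) (r : Fin m) :
    ∑ j, T.rho l j * T.kap r j = ∑ Q ∈ (T.Pc r).toFinset, #{b ∈ B | P ≤ b ∧ Q ≤ b} := by
  have hclass : ∀ j, T.rho l j * T.kap r j =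
      ∑ b ∈ T.Bc j with P ≤ b, #{Q ∈ (T.Pc r).toFinset | Q ≤ b} := by
    intro j
    rw [sum_const_nat fun b hb => ?_, T.rho_eq l j P hP]
    rw [← T.kap_eq r j b (mem_filter.1 hb).1, ← Set.ncard_coe_finset]
    congr 1
    ext Q
    simp
  calc ∑ j, T.rho l j * T.kap r j
      = ∑ b ∈ B with P ≤ b, #{Q ∈ (T.Pc r).toFinset | Q ≤ b} := by
        rw [T.sum_filter_eq_sum_filter_Bc]
        exact sum_congr rfl fun j _ => hclass j
    _ = ∑ Q ∈ (T.Pc r).toFinset, #{b ∈ B | P ≤ b ∧ Q ≤ b} := by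
        simpa only [bipartiteAbove, bipartiteBelow, filter_filter] using
          (sum_card_bipartiteAbove_eq_sum_card_bipartiteBelow (fun Q b => Q ≤ b)
            (s := (T.Pc r).toFinset) (t := {b ∈ B | P ≤ b})).symm

end TacticalDecomp

theorem tacticalDecomp_second_equations_general (F : Type*) [Field F] [Fintype F]
    (q v k lam2 m n : ℕ) (hq : Fintype.card F = q) (hk2 : 2 ≤ k)
    (B : Finset (Submodule F (Fin v → F))) (hB : IsQDesign F v 2 k lam2 B)
    (T : TacticalDecomp F v m n B) (l r : Fin m) :
    (l ≠ r → ∑ j, T.rho l j * T.kap r j = lam2 * (T.Pc r).ncard) ∧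
    (∑ j, T.rho l j * T.kap l j =
      lam2 * gaussBinom q (v - 1) 1 / gaussBinom q (k - 1) 1 +
        lam2 * ((T.Pc l).ncard - 1)) := by
  obtain ⟨P, hPl⟩ := T.Pc_nonempty l
  have hpoints : ∀ i, ∀ Q ∈ (T.Pc i).toFinset, finrank F Q = 1 :=
    fun i Q hQ => T.Pc_sub i (Set.mem_toFinset.1 hQ)
  have hP : finrank F P = 1 := T.Pc_sub l hPl
  refine ⟨fun hlr => ?_, ?_⟩
  · have hPr : P ∉ (T.Pc r).toFinset := fun h =>
      Set.disjoint_left.1 (T.Pc_disj l r hlr) hPl (Set.mem_toFinset.1 h)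
    rw [T.sum_rho_mul_kap hPl, hB.sum_card_blocks_through_pair hP _ (hpoints r) hPr,
      Set.ncard_eq_toFinset_card', mul_comm]
  · have hlam1 : lam2 * gaussBinom q (v - 1) 1 / gaussBinom q (k - 1) 1 = #{b ∈ B | P ≤ b} := by
      subst hq
      exact Nat.div_eq_of_eq_mul_left (gaussBinom_one_pos Fintype.one_lt_card (by omega))
        (hB.card_blocks_through_point_mul hP).symm
    have hPl' : P ∈ (T.Pc l).toFinset := Set.mem_toFinset.2 hPl
    rw [T.sum_rho_mul_kap hPl, ← add_sum_erase _ _ hPl',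
      hB.sum_card_blocks_through_pair hP _ (fun Q hQ => hpoints l Q (mem_of_mem_erase hQ))
        (notMem_erase P _), card_erase_of_mem hPl', Set.ncard_eq_toFinset_card', hlam1, mul_comm]
    simp only [and_self]

/-- For a tactical decomposition of a `2-(v,k,λ₂;q)` design,
`Σ_j ρ_{lj} κ_{rj} = λ₂·|Ψ_r|` if `l ≠ r`, and
`Σ_j ρ_{lj} κ_{lj} = λ₁ + λ₂·(|Ψ_l| − 1)` where
`λ₁ = λ₂ [v-1 choose 1]_q / [k-1 choose 1]_q`. -/
theorem tacticalDecomp_second_equations (F : Type*) [Field F] [Fintype F]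
    (q v k lam2 m n : ℕ) (hq : Fintype.card F = q) (hk2 : 2 ≤ k) (hkv : k ≤ v)
    (B : Finset (Submodule F (Fin v → F))) (hB : IsQDesign F v 2 k lam2 B)
    (T : TacticalDecomp F v m n B) (l r : Fin m) :
    (l ≠ r → ∑ j, T.rho l j * T.kap r j = lam2 * (T.Pc r).ncard) ∧
    (∑ j, T.rho l j * T.kap l j =
      lam2 * gaussBinom q (v - 1) 1 / gaussBinom q (k - 1) 1 +
        lam2 * ((T.Pc l).ncard - 1)) :=
  tacticalDecomp_second_equations_general F q v k lam2 m n hq hk2 B hB T l r
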